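/- If graphs G and H each have an oriented perfect path double cover, then their Cartesian product G □ H has an oriented perfect path double cover. -/

import Mathlib

/-!
Let `P` and `Q` be the covers of `G` and `H`, and `e u`, `f v` the ends of `P u`, `Q v`. The path
from `(u, v)` runs along `P u` inside the copy of `G` at `v` up to `(e u, v)`, then along `Q v`
inside the copy of `H` at `e u`, ending at `(e u, f v)`. The ends are distinct because `e` and `f`
are bijections. An arc `((a, w), (b, w))` lies only on the path from `(u, w)` where `P u` carries
`(a, b)`, and an arc `((x, c), (x, d))` only on the path from `(u, v)` where `e u = x` and `Q v`
carries `(c, d)`.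
-/

/-- An oriented perfect path double cover: for each vertex `v`, a directed path
`P v` (a nonempty list of distinct vertices, consecutive ones adjacent) starting
at `v`, such that each vertex is the end of exactly one path, and each arc of the
symmetric orientation lies in exactly one path. -/
def HasOPPDC {V : Type*} (G : SimpleGraph V) : Prop :=
  ∃ P : V → List V,
    (∀ v, P v ≠ [] ∧ (P v).Nodup ∧ (P v).Chain' G.Adj ∧ (P v).head? = some v) ∧
    (∀ w : V, ∃! v, (P v).getLast? = some w) ∧
    (∀ a b : V, G.Adj a b → ∃! v, (a, b) ∈ (P v).zip (P v).tail)

namespace List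

variable {α β : Type*}

theorem mem_zip_tail_map (f : α → β) (l : List α) (x y : β) :
    (x, y) ∈ (l.map f).zip (l.map f).tail ↔ ∃ a b, (a, b) ∈ l.zip l.tail ∧ f a = x ∧ f b = y := by
  rw [← map_tail, zip_map, mem_map]
  simp [Prod.ext_iff]

section Glue

variable {l₁ l₂ : List α} (h : l₁.getLast? = l₂.head?)
include h

theorem head?_append_tail_of_getLast?_eq_head? : (l₁ ++ l₂.tail).head? = l₁.head? := by
  cases l₁ with
  | nil => cases l₂ <;> simp_all
  | cons => simp

theorem getLast?_append_tail_of_getLast?_eq_head? : (l₁ ++ l₂.tail).getLast? = l₂.getLast? := by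
  rcases l₂ with _ | ⟨b, _ | ⟨c, t⟩⟩ <;> simp_all [getLast?_cons]

theorem IsChain.append_tail {R : α → α → Prop} (h₁ : l₁.IsChain R) (h₂ : l₂.IsChain R) :
    (l₁ ++ l₂.tail).IsChain R := by
  cases l₂ with
  | nil => simpa
  | cons b t =>
    refine h₁.append h₂.tail fun x hx y hy => ?_
    simp_all
    exact h₂.rel_head? hy

theorem mem_zip_tail_append_tail {p : α × α} :
    p ∈ (l₁ ++ l₂.tail).zip (l₁ ++ l₂.tail).tail ↔ p ∈ l₁.zip l₁.tail ∨ p ∈ l₂.zip l₂.tail := by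
  induction l₁ with
  | nil => cases l₂ <;> simp_all
  | cons a l ih =>
    rcases l with _ | ⟨b, l⟩
    · cases l₂ <;> simp_all
    · simp_all [or_assoc]

end Glue

theorem Nodup.append_tail {l₁ l₂ : List α} (h₁ : l₁.Nodup) (h₂ : l₂.Nodup)
    (h : ∀ x ∈ l₁, x ∈ l₂ → x ∈ l₂.head?) : (l₁ ++ l₂.tail).Nodup := by
  cases l₂ with
  | nil => simpa
  | cons b t =>
    refine nodup_append.2 ⟨h₁, h₂.of_cons, fun x hx y hy hxy => ?_⟩
    subst hxy
    have hbx : b = x := by simpa using h x hx (mem_cons_of_mem b hy)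
    exact (nodup_cons.1 h₂).1 (hbx ▸ hy)

end List

theorem ExistsUnique.prod {α β : Type*} {p : α → Prop} {q : β → Prop} (hp : ∃! a, p a)
    (hq : ∃! b, q b) : ∃! x : α × β, p x.1 ∧ q x.2 := by
  obtain ⟨a, ha, ha'⟩ := hp
  obtain ⟨b, hb, hb'⟩ := hq
  exact ⟨(a, b), ⟨ha, hb⟩, fun x hx => Prod.ext (ha' _ hx.1) (hb' _ hx.2)⟩

theorem exists_bijective_getLast? {V : Type*} {P : V → List V} (hne : ∀ v, P v ≠ [])
    (h : ∀ w, ∃! v, (P v).getLast? = some w) :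
    ∃ e : V → V, e.Bijective ∧ ∀ v, (P v).getLast? = some (e v) := by
  refine ⟨fun v => (P v).getLast (hne v), ?_, fun v => List.getLast?_eq_some_getLast _⟩
  rw [Function.bijective_iff_existsUnique]
  simpa [List.getLast?_eq_some_getLast (hne _)] using h

namespace SimpleGraph

variable {V W : Type*}

def boxPath (P : V → List V) (Q : W → List W) (e : V → V) (x : V × W) : List (V × W) :=
  (P x.1).map (·, x.2) ++ ((Q x.2).map (e x.1, ·)).tail

variable {P : V → List V} {Q : W → List W} {e : V → V} {u : V} {v : W}

theorem getLast?_map_eq_head?_map (hPe : (P u).getLast? = some (e u))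
    (hQv : (Q v).head? = some v) : ((P u).map (·, v)).getLast? = ((Q v).map (e u, ·)).head? := by
  simp [List.getLast?_map, hPe, hQv]

theorem head?_boxPath (hPe : (P u).getLast? = some (e u)) (hQv : (Q v).head? = some v) :
    (boxPath P Q e (u, v)).head? = (P u).head?.map (·, v) := by
  rw [boxPath, List.head?_append_tail_of_getLast?_eq_head? (getLast?_map_eq_head?_map hPe hQv),
    List.head?_map]

theorem getLast?_boxPath (hPe : (P u).getLast? = some (e u)) (hQv : (Q v).head? = some v) :
    (boxPath P Q e (u, v)).getLast? = (Q v).getLast?.map (e u, ·) := by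
  rw [boxPath, List.getLast?_append_tail_of_getLast?_eq_head? (getLast?_map_eq_head?_map hPe hQv),
    List.getLast?_map]

theorem isChain_boxPath {G : SimpleGraph V} {H : SimpleGraph W}
    (hPe : (P u).getLast? = some (e u)) (hQv : (Q v).head? = some v)
    (hP : (P u).IsChain G.Adj) (hQ : (Q v).IsChain H.Adj) :
    (boxPath P Q e (u, v)).IsChain (G □ H).Adj := by
  refine List.IsChain.append_tail (getLast?_map_eq_head?_map hPe hQv) ?_ ?_
  · exact (List.isChain_map _).2 (hP.imp fun a b hab => boxProd_adj.2 (Or.inl ⟨hab, rfl⟩))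
  · exact (List.isChain_map _).2 (hQ.imp fun a b hab => boxProd_adj.2 (Or.inr ⟨hab, rfl⟩))

theorem nodup_boxPath (hQv : (Q v).head? = some v) (hP : (P u).Nodup) (hQ : (Q v).Nodup) :
    (boxPath P Q e (u, v)).Nodup := by
  refine List.Nodup.append_tail (hP.map fun _ _ => congrArg Prod.fst)
    (hQ.map fun _ _ => congrArg Prod.snd) fun x hx hx' => ?_
  simp only [List.mem_map] at hx hx'
  obtain ⟨a, -, rfl⟩ := hx
  obtain ⟨b, -, hb⟩ := hx'
  simp_all

theorem mem_zip_tail_boxPath (hPe : (P u).getLast? = some (e u)) (hQv : (Q v).head? = some v)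
    {a b : V} {c d : W} :
    ((a, c), (b, d)) ∈ (boxPath P Q e (u, v)).zip (boxPath P Q e (u, v)).tail ↔
      (a, b) ∈ (P u).zip (P u).tail ∧ c = v ∧ d = v ∨
      a = e u ∧ b = e u ∧ (c, d) ∈ (Q v).zip (Q v).tail := by
  rw [boxPath, List.mem_zip_tail_append_tail (getLast?_map_eq_head?_map hPe hQv),
    List.mem_zip_tail_map, List.mem_zip_tail_map]
  simp only [Prod.ext_iff]
  grind

end SimpleGraph

theorem boxProd_hasOPPDC_general {V W : Type*}
    (G : SimpleGraph V) (H : SimpleGraph W)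
    (hG : HasOPPDC G) (hH : HasOPPDC H) :
    HasOPPDC (G.boxProd H) := by
  obtain ⟨P, hP, hPlast, hParc⟩ := hG
  obtain ⟨Q, hQ, hQlast, hQarc⟩ := hH
  obtain ⟨e, he, hPe⟩ := exists_bijective_getLast? (fun u => (hP u).1) hPlast
  obtain ⟨f, hf, hQf⟩ := exists_bijective_getLast? (fun v => (hQ v).1) hQlast
  have hQv (v : W) : (Q v).head? = some v := (hQ v).2.2.2
  rw [Function.bijective_iff_existsUnique] at he hf
  refine ⟨SimpleGraph.boxPath P Q e, fun ⟨u, v⟩ => ?_, fun ⟨x, y⟩ => ?_, ?_⟩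
  · obtain ⟨-, hPnd, hPch, hPu⟩ := hP u
    obtain ⟨-, hQnd, hQch, -⟩ := hQ v
    have hhead : (SimpleGraph.boxPath P Q e (u, v)).head? = some (u, v) := by
      simp [SimpleGraph.head?_boxPath (hPe u) (hQv v), hPu]
    exact ⟨fun h => by simp [h] at hhead, SimpleGraph.nodup_boxPath (hQv v) hPnd hQnd,
      SimpleGraph.isChain_boxPath (hPe u) (hQv v) hPch hQch, hhead⟩
  · simp only [SimpleGraph.getLast?_boxPath (hPe _) (hQv _), hQf, Option.map_some,
      Option.some.injEq, Prod.mk.injEq]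
    exact (he x).prod (hf y)
  · rintro ⟨a, c⟩ ⟨b, d⟩ hadj
    simp only [SimpleGraph.mem_zip_tail_boxPath (hPe _) (hQv _)]
    rcases SimpleGraph.boxProd_adj.1 hadj with ⟨hab, rfl : c = d⟩ | ⟨hcd, rfl : a = b⟩
    · refine (existsUnique_congr fun x => ?_).2 ((hParc a b hab).prod (existsUnique_eq' (a' := c)))
      have := hab.ne
      grind
    · refine (existsUnique_congr fun x => ?_).2 ((he a).prod (hQarc c d hcd))
      have := hcd.ne
      grind

/-- if `G` and `H` have an OPPDC, then so does `G □ H`. -/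
theorem boxProd_hasOPPDC {V W : Type*} [Fintype V] [Fintype W]
    (G : SimpleGraph V) (H : SimpleGraph W)
    (hG : HasOPPDC G) (hH : HasOPPDC H) :
    HasOPPDC (G.boxProd H) :=
  boxProd_hasOPPDC_general G H hG hH
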